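/- Let H be a Hilbert space and let L: H → R be a function admitting, for each b ∈ H, a decomposition L(b) = R(b, η) - D(η, b) - E(η) valid for every η in a set M, where R(·, η) is convex for each η, D(η, b) ≥ 0 with D(η_b, b) = 0 for a distinguished η_b, and E does not depend on b. If b̂ is a local minimizer of L, then b̂ minimizes R(·, η_{b̂}) over H; i.e., b̂ is a fixed point of the EM map b ↦ argmin_b' R(b', η_b). -/
import Mathlib


open Filter

/-- Abstract EM principle: if `L(b) = R(b,η) - D(η,b) - E(η)` for every `η`,
with `R(·,η)` convex, `D ≥ 0` and `D(η_b, b) = 0`, then any local minimizer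
`b̂` of `L` minimizes `R(·, η_{b̂})`, i.e. is a fixed point of the EM map. -/
theorem stmt15 {H : Type*} [NormedAddCommGroup H] [InnerProductSpace ℝ H]
    {M : Type*} (L : H → ℝ) (R : H → M → ℝ) (D : M → H → ℝ) (E : M → ℝ)
    (ηb : H → M)
    (hdec : ∀ (b : H) (η : M), L b = R b η - D η b - E η)
    (hconv : ∀ η : M, ConvexOn ℝ Set.univ fun b => R b η)
    (hD : ∀ (η : M) (b : H), 0 ≤ D η b)
    (hD0 : ∀ b : H, D (ηb b) b = 0)
    (bhat : H)
    (hloc : ∃ ε > (0 : ℝ), ∀ b ∈ Metric.ball bhat ε, L bhat ≤ L b) :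
    ∀ b : H, R bhat (ηb bhat) ≤ R b (ηb bhat) := by
  by_contra hcon
  push_neg at hcon
  obtain ⟨b, hb⟩ := hcon
  obtain ⟨ε, hε, hmin⟩ := hloc
  set η := ηb bhat with hη
  set t : ℝ := min 1 (ε / (2 * (‖b - bhat‖ + 1))) with ht
  have hnorm : (0 : ℝ) < ‖b - bhat‖ + 1 := by positivity
  have ht0 : 0 < t := lt_min one_pos (by positivity)
  have ht1 : t ≤ 1 := min_le_left _ _
  set bt : H := (1 - t) • bhat + t • b with hbt
  -- bt is in the ball
  have hball : bt ∈ Metric.ball bhat ε := by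
    have : bt - bhat = t • (b - bhat) := by
      rw [hbt]; module
    rw [Metric.mem_ball, dist_eq_norm, this, norm_smul,
      Real.norm_of_nonneg ht0.le]
    calc t * ‖b - bhat‖ ≤ (ε / (2 * (‖b - bhat‖ + 1))) * ‖b - bhat‖ := by
          apply mul_le_mul_of_nonneg_right (min_le_right _ _) (norm_nonneg _)
      _ < ε := by
          rw [div_mul_eq_mul_div, div_lt_iff₀ (by positivity)]
          nlinarith [norm_nonneg (b - bhat)]
  -- convexity
  have hconvex := (hconv η).2 (Set.mem_univ bhat) (Set.mem_univ b)
    (by linarith : (0:ℝ) ≤ 1 - t) ht0.le (by ring)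
  have hRlt : R bt η < R bhat η := by
    calc R bt η ≤ (1 - t) * R bhat η + t * R b η := hconvex
      _ < R bhat η := by nlinarith
  have hLlt : L bt < L bhat := by
    have h1 := hdec bt η
    have h2 := hdec bhat η
    have h3 := hD η bt
    have h4 := hD0 bhat
    rw [← hη] at h4
    linarith
  exact absurd (hmin bt hball) (not_le.mpr hLlt)
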